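/- If h : 𝒜 → ℂ is a linear functional which is invariant for the coaction α, i.e. (h⊗id)(α(a)) = h(a)·1 for all a ∈ 𝒜, and which is a trace, i.e. h(xy) = h(yx) for all x, y ∈ 𝒜, then for all a, b ∈ 𝒜 one has (h⊗id)((b⊗1)·α(a)) = (h⊗id)(((id⊗S)α(b))·(a⊗1)). (This identity is the key equality from which the intertwining relation (id⊗β)W = (γ⊗id)W of the main theorem follows.) -/
import Mathlib


/- Setting: `P` a Hopf algebra over `ℂ` (antipode `S`), `A` a unital `ℂ`-algebra and
`α : A → A ⊗ P` a unital algebra homomorphism which is a right coaction.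
STATEMENT 11: if `h : A → ℂ` is `α`-invariant (`(h ⊗ id)(α(a)) = h(a)·1`) and tracial
(`h(xy) = h(yx)`), then `(h ⊗ id)((b ⊗ 1)·α(a)) = (h ⊗ id)(((id ⊗ S)α(b))·(a ⊗ 1))`
for all `a b`. -/

open scoped TensorProduct
open TensorProduct

section
variable {A P : Type*} [Ring A] [Algebra ℂ A] [Ring P] [HopfAlgebra ℂ P]

/-- `h ⊗ id : A ⊗ P → P`. -/
noncomputable def hsl (h : A →ₗ[ℂ] ℂ) : A ⊗[ℂ] P →ₗ[ℂ] P :=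
  (TensorProduct.lid ℂ P).toLinearMap ∘ₗ TensorProduct.map h LinearMap.id

lemma hsl_tmul (h : A →ₗ[ℂ] ℂ) (x : A) (p : P) :
    hsl h (x ⊗ₜ[ℂ] p) = h x • p := by
  simp [hsl]

lemma hsl_mul_one_tmul (h : A →ₗ[ℂ] ℂ) (w : A ⊗[ℂ] P) (p : P) :
    hsl h (w * ((1 : A) ⊗ₜ[ℂ] p)) = hsl h w * p := by
  induction w using TensorProduct.induction_on with
  | zero => simp
  | tmul x q =>
      rw [Algebra.TensorProduct.tmul_mul_tmul, mul_one, hsl_tmul, hsl_tmul,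
        smul_mul_assoc]
  | add u v hu hv => rw [add_mul, map_add, hu, hv, map_add, add_mul]

set_option maxHeartbeats 1000000 in
set_option synthInstance.maxHeartbeats 400000 in
theorem strong_right_invariance_traced
    (α : A →ₐ[ℂ] A ⊗[ℂ] P)
    -- `α` is coassociative: `(α ⊗ id) ∘ α = (id ⊗ Δ_P) ∘ α`
    (hcoassoc : ∀ a : A,
      (TensorProduct.assoc ℂ A P P)
          (TensorProduct.map α.toLinearMap LinearMap.id (α a)) =
        TensorProduct.map LinearMap.id (Coalgebra.comul (R := ℂ)) (α a))
    -- `α` is counital: `(id ⊗ ε_P) ∘ α = id`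
    (hcounit : ∀ a : A,
      (TensorProduct.rid ℂ A)
          (TensorProduct.map LinearMap.id (Coalgebra.counit (R := ℂ)) (α a)) = a)
    -- `h` is invariant: `(h ⊗ id)(α(a)) = h(a)·1`
    (h : A →ₗ[ℂ] ℂ)
    (h_inv : ∀ a : A, hsl h (α a) = h a • 1)
    -- `h` is a trace
    (h_trace : ∀ x y : A, h (x * y) = h (y * x)) :
    ∀ a b : A,
      hsl h ((b ⊗ₜ[ℂ] (1 : P)) * α a) =
        hsl h
          ((TensorProduct.map LinearMap.id (HopfAlgebra.antipode (R := ℂ)) (α b)) *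
            (a ⊗ₜ[ℂ] (1 : P))) := by
  intro a b
  classical
  set S : P →ₗ[ℂ] P := HopfAlgebra.antipode (R := ℂ) with hS
  -- `c x = (h ⊗ id)(α(a) · (x ⊗ 1))`
  set c : A →ₗ[ℂ] P :=
    hsl h ∘ₗ LinearMap.mulLeft ℂ (α a) ∘ₗ ((TensorProduct.mk ℂ A P).flip 1)
    with hc
  have hc_apply : ∀ x : A, c x = hsl h (α a * (x ⊗ₜ[ℂ] 1)) := fun x => rfl
  -- `mulS (p ⊗ q) = p * S q`
  set mulS : P ⊗[ℂ] P →ₗ[ℂ] P :=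
    LinearMap.mul' ℂ P ∘ₗ TensorProduct.map LinearMap.id S with hmulS
  have hmulS_apply : ∀ p q : P, mulS (p ⊗ₜ[ℂ] q) = p * S q := fun p q => by
    simp [hmulS]
  -- `Q (x ⊗ (p ⊗ q)) = c x * (p * S q)`
  set Q : A ⊗[ℂ] (P ⊗[ℂ] P) →ₗ[ℂ] P :=
    LinearMap.mul' ℂ P ∘ₗ TensorProduct.map c mulS with hQ
  have hQ_tmul : ∀ (x : A) (u : P ⊗[ℂ] P), Q (x ⊗ₜ[ℂ] u) = c x * mulS u := by
    intro x u
    induction u using TensorProduct.induction_on with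
    | zero => simp
    | tmul p q => simp [hQ]
    | add u v hu hv => rw [tmul_add, map_add, hu, hv, map_add, mul_add]
  -- `M (x ⊗ p) = (h ⊗ id)(α(a) · α(x)) * S p`
  set M : A ⊗[ℂ] P →ₗ[ℂ] P :=
    LinearMap.mul' ℂ P ∘ₗ
      TensorProduct.map (hsl h ∘ₗ LinearMap.mulLeft ℂ (α a) ∘ₗ α.toLinearMap) S
    with hM
  have hM_apply : ∀ (x : A) (p : P),
      M (x ⊗ₜ[ℂ] p) = hsl h (α a * α x) * S p := fun x p => by
    simp [hM]
  -- Step 1: the right-hand side equals `M (α b)`.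
  have step1 : ∀ t : A ⊗[ℂ] P,
      hsl h ((TensorProduct.map LinearMap.id S t) * (a ⊗ₜ[ℂ] (1 : P))) = M t := by
    intro t
    induction t using TensorProduct.induction_on with
    | zero => simp
    | tmul x p =>
        rw [map_tmul, LinearMap.id_apply, Algebra.TensorProduct.tmul_mul_tmul,
          mul_one, hsl_tmul, hM_apply, ← map_mul, h_inv, smul_mul_assoc, one_mul,
          h_trace]
    | add u v hu hv => rw [map_add, add_mul, map_add, hu, hv, map_add]
  -- Step 2: `M = Q ∘ assoc ∘ (α ⊗ id)`.
  have step2 : ∀ t : A ⊗[ℂ] P,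
      M t = Q ((TensorProduct.assoc ℂ A P P)
        (TensorProduct.map α.toLinearMap LinearMap.id t)) := by
    intro t
    induction t using TensorProduct.induction_on with
    | zero => simp
    | tmul x p =>
        rw [hM_apply, map_tmul, LinearMap.id_apply, AlgHom.toLinearMap_apply]
        generalize (α x : A ⊗[ℂ] P) = s
        induction s using TensorProduct.induction_on with
        | zero => simp
        | tmul y q =>
            rw [assoc_tmul, hQ_tmul, hmulS_apply, hc_apply]
            have : (y : A) ⊗ₜ[ℂ] (q : P) = (y ⊗ₜ[ℂ] (1 : P)) * ((1 : A) ⊗ₜ[ℂ] q) := by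
              rw [Algebra.TensorProduct.tmul_mul_tmul, mul_one, one_mul]
            rw [this, ← mul_assoc (α a), hsl_mul_one_tmul, mul_assoc]
        | add u v hu hv =>
            rw [mul_add, map_add, add_mul, hu, hv, add_tmul, map_add, map_add]
    | add u v hu hv => simp only [map_add, hu, hv]
  -- Step 3: `Q ∘ (id ⊗ Δ)` collapses via the antipode axiom.
  have step3 : ∀ t : A ⊗[ℂ] P,
      Q (TensorProduct.map LinearMap.id (Coalgebra.comul (R := ℂ)) t) =
        c ((TensorProduct.rid ℂ A)
          (TensorProduct.map LinearMap.id (Coalgebra.counit (R := ℂ)) t)) := by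
    intro t
    induction t using TensorProduct.induction_on with
    | zero => simp
    | tmul x p =>
        simp only [map_tmul, LinearMap.id_apply]
        rw [hQ_tmul]
        have hms : mulS (Coalgebra.comul (R := ℂ) p) =
            algebraMap ℂ P (Coalgebra.counit (R := ℂ) p) := by
          have : TensorProduct.map (LinearMap.id : P →ₗ[ℂ] P) S =
              S.lTensor P := rfl
          rw [hmulS, LinearMap.comp_apply, this,
            HopfAlgebra.mul_antipode_lTensor_comul_apply]
        rw [hms, ← Algebra.commutes, ← Algebra.smul_def, rid_tmul, map_smul]
    | add u v hu hv => simp only [map_add, hu, hv]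
  -- Step 4: trace symmetry `(h ⊗ id)(t · (b ⊗ 1)) = (h ⊗ id)((b ⊗ 1) · t)`.
  have step4 : ∀ t : A ⊗[ℂ] P,
      hsl h (t * (b ⊗ₜ[ℂ] (1 : P))) = hsl h ((b ⊗ₜ[ℂ] (1 : P)) * t) := by
    intro t
    induction t using TensorProduct.induction_on with
    | zero => simp
    | tmul x p =>
        rw [Algebra.TensorProduct.tmul_mul_tmul, Algebra.TensorProduct.tmul_mul_tmul,
          mul_one, one_mul, hsl_tmul, hsl_tmul, h_trace]
    | add u v hu hv => simp only [add_mul, mul_add, map_add, hu, hv]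
  calc hsl h ((b ⊗ₜ[ℂ] (1 : P)) * α a)
      = hsl h (α a * (b ⊗ₜ[ℂ] (1 : P))) := (step4 (α a)).symm
    _ = c b := (hc_apply b).symm
    _ = c ((TensorProduct.rid ℂ A)
          (TensorProduct.map LinearMap.id (Coalgebra.counit (R := ℂ)) (α b))) := by
          rw [hcounit b]
    _ = Q (TensorProduct.map LinearMap.id (Coalgebra.comul (R := ℂ)) (α b)) :=
          (step3 (α b)).symm
    _ = Q ((TensorProduct.assoc ℂ A P P)
          (TensorProduct.map α.toLinearMap LinearMap.id (α b))) := by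
          rw [hcoassoc b]
    _ = M (α b) := (step2 (α b)).symm
    _ = hsl h ((TensorProduct.map LinearMap.id S (α b)) * (a ⊗ₜ[ℂ] (1 : P))) :=
          (step1 (α b)).symm

end
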